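/- arXiv:1906.10093 — 2 statements merged into one kernel-verified Lean document; each statement's English description precedes it below -/
import Mathlib

section
/- Let D be a recurrent SCC of B and d = ⟨q,s⟩ ∈ D. Then for every e ∈ Co(d) there exists a word w ∈ S* of length at most |Q|·|D| such that d⇒w is defined and {d, e} ⊆ d⇒w. -/
open Matrix MeasureTheory

attribute [local instance] Classical.propDecidable

/-- A Büchi automaton with state space `Q` and alphabet `A`. -/
structure BA (Q A : Type) where
  delta : Q → A → Set Q
  init : Set Q
  acc : Set Q

namespace BA

variable {Q A : Type}

/-- A run of the automaton on an infinite word. -/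
def InfRun (𝒜 : BA Q A) (w : ℕ → A) (ρ : ℕ → Q) : Prop :=
  ρ 0 ∈ 𝒜.init ∧ ∀ i, ρ (i + 1) ∈ 𝒜.delta (ρ i) (w i)

/-- An accepting run: some accepting state occurs infinitely often. -/
def AccRun (𝒜 : BA Q A) (w : ℕ → A) (ρ : ℕ → Q) : Prop :=
  𝒜.InfRun w ρ ∧ ∃ q ∈ 𝒜.acc, {i : ℕ | ρ i = q}.Infinite

/-- The language of infinite words having at least one accepting run. -/
def Lang (𝒜 : BA Q A) : Set (ℕ → A) := {w | ∃ ρ, 𝒜.AccRun w ρ}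

/-- Unambiguous: every infinite word has at most one accepting run. -/
def Unambiguous (𝒜 : BA Q A) : Prop :=
  ∀ w ρ₁ ρ₂, 𝒜.AccRun w ρ₁ → 𝒜.AccRun w ρ₂ → ρ₁ = ρ₂

/-- `𝒜.IsRun q w ρ r` : the list `ρ` (of length `|w| + 1`) is a run for the
finite word `w` from `q` to `r`. -/
def IsRun (𝒜 : BA Q A) : Q → List A → List Q → Q → Prop
  | q, [], ρ, r => q = r ∧ ρ = [q]
  | q, a :: w, ρ, r => ∃ q' ρ', ρ = q :: ρ' ∧ q' ∈ 𝒜.delta q a ∧ 𝒜.IsRun q' w ρ' r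

/-- A diamond: two distinct runs for the same finite word with the
same start and end states. -/
def HasDiamond (𝒜 : BA Q A) : Prop :=
  ∃ q r w ρ₁ ρ₂, ρ₁ ≠ ρ₂ ∧ 𝒜.IsRun q w ρ₁ r ∧ 𝒜.IsRun q w ρ₂ r

/-- Every state is reachable from some initial state. -/
def AllReachable (𝒜 : BA Q A) : Prop :=
  ∀ q, ∃ q₀ ∈ 𝒜.init, ∃ w ρ, 𝒜.IsRun q₀ w ρ q

/-- The automaton `𝒜` with `q` as the only initial state. -/
def fromState (𝒜 : BA Q A) (q : Q) : BA Q A := { 𝒜 with init := {q} }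

/-- `|δ|`: the number of pairs `(q, r)` such that `r ∈ δ(q, a)` for some letter `a`. -/
noncomputable def numTrans (𝒜 : BA Q A) : ℕ := {p : Q × Q | ∃ a, p.2 ∈ 𝒜.delta p.1 a}.ncard

end BA

/-- A (row-)stochastic matrix with nonnegative entries. -/
def IsMarkov {S : Type} [Fintype S] (M : Matrix S S ℝ) : Prop :=
  (∀ s t, 0 ≤ M s t) ∧ ∀ s, ∑ t, M s t = 1

/-- `Pr s` is the probability measure of the Markov chain `M` started at `s`:
the cylinder of the finite sequence `u 0, …, u n` has measure
`M (u 0) (u 1) ⋯ M (u (n-1)) (u n)` if `u 0 = s`, and `0` otherwise. -/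
def CylinderSpec {S : Type} [Fintype S] [MeasurableSpace S]
    (M : Matrix S S ℝ) (Pr : S → Measure (ℕ → S)) : Prop :=
  ∀ (s : S) (n : ℕ) (u : ℕ → S),
    Pr s {ω | ∀ i ≤ n, ω i = u i} =
      if u 0 = s then ENNReal.ofReal (∏ i ∈ Finset.range n, M (u i) (u (i + 1))) else 0

/-- The vector `z`, given by `z ⟨q, s⟩ = Pr_s (L(𝒜_q))`. -/
noncomputable def zvec {Q S : Type} [MeasurableSpace S]
    (𝒜 : BA Q S) (Pr : S → Measure (ℕ → S)) : Q × S → ℝ :=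
  fun p => ((Pr p.2) ((𝒜.fromState p.1).Lang)).toReal

/-- The matrix `B` built from the automaton `𝒜` and the Markov chain `M`. -/
noncomputable def Bmat {Q S : Type} (𝒜 : BA Q S) (M : Matrix S S ℝ) :
    Matrix (Q × S) (Q × S) ℝ :=
  Matrix.of fun p p' => if p'.1 ∈ 𝒜.delta p.1 p.2 then M p.2 p'.2 else 0

/-- The spectral radius of a real square matrix: the largest absolute value of
its complex eigenvalues. -/
noncomputable def specRad {n : Type} [Fintype n] [DecidableEq n] (N : Matrix n n ℝ) : ℝ :=
  sSup {x : ℝ | ∃ c ∈ spectrum ℂ (N.map Complex.ofReal), x = ‖c‖}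

/-- `D` is a strongly connected component of the graph of the nonnegative matrix `N`
(edges are the positive entries). -/
def IsSCC {V : Type} (N : Matrix V V ℝ) (D : Set V) : Prop :=
  ∃ v, D = {w | Relation.ReflTransGen (fun a b => 0 < N a b) v w ∧
               Relation.ReflTransGen (fun a b => 0 < N a b) w v}

/-- The submatrix `N_{D,D}`. -/
def subMat {V : Type} (N : Matrix V V ℝ) (D : Set V) : Matrix ↥D ↥D ℝ :=
  N.submatrix (Subtype.val) (Subtype.val)

/-- An SCC `D` of `B` is recurrent if `ρ(B_{D,D}) = 1`. -/
def RecurrentSCC {Q S : Type} [Fintype Q] [Fintype S]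
    (𝒜 : BA Q S) (M : Matrix S S ℝ) (D : Set (Q × S)) : Prop :=
  specRad (subMat (Bmat 𝒜 M) D) = 1

/-- An SCC `D` of `B` is accepting if it contains a pair `⟨q, s⟩` with `q` accepting. -/
def AcceptingSCC {Q S : Type} (𝒜 : BA Q S) (D : Set (Q × S)) : Prop :=
  ∃ p ∈ D, p.1 ∈ 𝒜.acc

/-- One step of the fibre operation: `f ⇒ t`. -/
def fibStep {Q S : Type} (𝒜 : BA Q S) (D : Set (Q × S)) (f : Set (Q × S)) (t : S) :
    Set (Q × S) :=
  {p ∈ D | p.2 = t ∧ ∃ e ∈ f, p.1 ∈ 𝒜.delta e.1 e.2}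

/-- The fibre operation along a word: `f ⇒ w`. -/
def fibRun {Q S : Type} (𝒜 : BA Q S) (D : Set (Q × S)) (f : Set (Q × S)) :
    List S → Set (Q × S)
  | [] => f
  | t :: w => fibRun 𝒜 D (fibStep 𝒜 D f t) w

/-- A word `s₁ ⋯ sₙ` is enabled if `M_{sᵢ, sᵢ₊₁} > 0` for all `i < n`. -/
def Enabled {S : Type} (M : Matrix S S ℝ) (l : List S) : Prop :=
  l.Chain' fun a b => 0 < M a b

/-- `c` is a cut: `c = d ⇒ v` for some `d ∈ D` and enabled `v`, and `c ⇒ w`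
is nonempty for every `w` for which it is defined. -/
def IsCut {Q S : Type} (𝒜 : BA Q S) (M : Matrix S S ℝ) (D : Set (Q × S))
    (c : Set (Q × S)) : Prop :=
  ∃ d ∈ D, ∃ v : List S, Enabled M (d.2 :: v) ∧ c = fibRun 𝒜 D {d} v ∧
    ∀ w : List S, Enabled M (v.getLastD d.2 :: w) → fibRun 𝒜 D c w ≠ ∅

/-- The co-reachability set `Co(d)`: those `e ∈ D` with `{d, e} ⊆ d ⇒ w` for some `w`. -/
def Co {Q S : Type} (𝒜 : BA Q S) (M : Matrix S S ℝ) (D : Set (Q × S)) (d : Q × S) :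
    Set (Q × S) :=
  {e ∈ D | ∃ w : List S, Enabled M (d.2 :: w) ∧
    d ∈ fibRun 𝒜 D {d} w ∧ e ∈ fibRun 𝒜 D {d} w}

/-- The matrix `Δ(t)` over `D`. -/
noncomputable def Delta {Q S : Type} (𝒜 : BA Q S) (M : Matrix S S ℝ) (D : Set (Q × S))
    (t : S) : Matrix ↥D ↥D ℝ :=
  Matrix.of fun p p' =>
    if (p' : Q × S).2 = t ∧ 0 < M (p : Q × S).2 t ∧
       (p' : Q × S).1 ∈ 𝒜.delta (p : Q × S).1 (p : Q × S).2
    then 1 else 0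

/-- The matrix `Δ(w)` for a word `w` (`Δ(ε)` is the identity). -/
noncomputable def DeltaW {Q S : Type} [Fintype Q] [Fintype S]
    (𝒜 : BA Q S) (M : Matrix S S ℝ) (D : Set (Q × S)) : List S → Matrix ↥D ↥D ℝ
  | [] => 1
  | t :: w => Delta 𝒜 M D t * DeltaW 𝒜 M D w

/-- The matrix `Δ′(t)` over `D`. -/
noncomputable def Delta' {Q S : Type} (D : Set (Q × S)) (t : S) : Matrix ↥D ↥D ℝ :=
  Matrix.of fun p p' => if p = p' ∧ (p : Q × S).2 = t then 1 else 0

/-- The vector space `V(s)` spanned by the vectors `Δ′(s) Δ(w) y` for all words `w`. -/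
noncomputable def Vspace {Q S : Type} [Fintype Q] [Fintype S]
    (𝒜 : BA Q S) (M : Matrix S S ℝ) (D : Set (Q × S)) (y : ↥D → ℝ) (s : S) :
    Submodule ℝ (↥D → ℝ) :=
  Submodule.span ℝ {x : ↥D → ℝ | ∃ w : List S, x = (Delta' D s * DeltaW 𝒜 M D w).mulVec y}

/-- A vector `μ ∈ ℝ^D` is a fibre over `s` if it vanishes outside `Q × {s}`. -/
def IsFibreVec {Q S : Type} (D : Set (Q × S)) (μ : ↥D → ℝ) (s : S) : Prop :=
  ∀ p : ↥D, (p : Q × S).2 ≠ s → μ p = 0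

/-- A pseudo-cut over `s` (with respect to the vector `zD`): a fibre `μ` over `s` with
`μᵀ Δ(w) zD = μᵀ zD` for all `w` such that `s w` is enabled. -/
def IsPseudoCut {Q S : Type} [Fintype Q] [Fintype S]
    (𝒜 : BA Q S) (M : Matrix S S ℝ) (D : Set (Q × S)) (zD : ↥D → ℝ)
    (μ : ↥D → ℝ) (s : S) : Prop :=
  IsFibreVec D μ s ∧
  ∀ w : List S, Enabled M (s :: w) → μ ⬝ᵥ (DeltaW 𝒜 M D w).mulVec zD = μ ⬝ᵥ zD

/-- A `Co(d)`-pseudo-cut: a pseudo-cut over `d.2` that is nonzero at `d` and vanishes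
outside `Co(d)`. -/
def IsCoPseudoCut {Q S : Type} [Fintype Q] [Fintype S]
    (𝒜 : BA Q S) (M : Matrix S S ℝ) (D : Set (Q × S)) (zD : ↥D → ℝ)
    (d : Q × S) (hd : d ∈ D) (μ : ↥D → ℝ) : Prop :=
  IsPseudoCut 𝒜 M D zD μ d.2 ∧ μ ⟨d, hd⟩ ≠ 0 ∧
  ∀ e : ↥D, (e : Q × S) ∉ Co 𝒜 M D d → μ e = 0

/-- Auxiliary order: shortlex on reversed words. -/
def revLT {S : Type} [LinearOrder S] : List S → List S → Prop
  | [], u => u ≠ []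
  | _ :: _, [] => False
  | a :: v, b :: w =>
      (a :: v).length < (b :: w).length ∨
      ((a :: v).length = (b :: w).length ∧ (a < b ∨ (a = b ∧ revLT v w)))

/-- The order `≪` on words: shortlex, but with words read from right to left. -/
def wordLT {S : Type} [LinearOrder S] (u v : List S) : Prop :=
  revLT u.reverse v.reverse

/-!
The two runs witnessing `d, e ∈ d ⇒ w` read the same letters, so at each position they are
described jointly by a state of `Q` (for the run towards `e`) and an element of `D` (for the run
towards `d`). If `w` is longer than `|Q|·|D|`, such a pair repeats, and the segment of `w` between
the repetitions can be cut out of both runs at once.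
-/

namespace List

variable {α : Type*}

theorem Nodup.length_le_ncard {l : List α} {U : Set α} (hl : l.Nodup) (hU : U.Finite)
    (hlU : ∀ x ∈ l, x ∈ U) : l.length ≤ U.ncard := by
  classical
  rw [← toFinset_card_of_nodup hl, ← Set.ncard_coe_finset]
  exact Set.ncard_le_ncard (fun x hx => hlU x (by simpa using hx)) hU

theorem exists_eq_append_cons_append_cons_of_not_nodup {l : List α} (hl : ¬ l.Nodup) :
    ∃ l₁ x l₂ l₃, l = l₁ ++ x :: (l₂ ++ x :: l₃) := by
  induction l with
  | nil => exact absurd nodup_nil hl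
  | cons y l ih =>
    by_cases hy : y ∈ l
    · obtain ⟨l₂, l₃, rfl⟩ := append_of_mem hy
      exact ⟨[], y, l₂, l₃, rfl⟩
    · obtain ⟨l₁, x, l₂, l₃, rfl⟩ := ih fun hnd => hl (nodup_cons.mpr ⟨hy, hnd⟩)
      exact ⟨y :: l₁, x, l₂, l₃, rfl⟩

theorem IsChain.forall_mem_of_rel {R : α → α → Prop} {p : α → Prop} (hR : ∀ x y, R x y → p y) :
    ∀ {a : α} {l : List α}, (a :: l).IsChain R → ∀ y ∈ l, p y
  | _, [], _, _, hy => absurd hy not_mem_nil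
  | _, b :: l, h, y, hy => by
    rw [isChain_cons_cons] at h
    rcases mem_cons.mp hy with rfl | hy
    · exact hR _ _ h.1
    · exact h.2.forall_mem_of_rel hR y hy

theorem IsChain.exists_length_le_ncard {R : α → α → Prop} {U : Set α} (hU : U.Finite)
    (hRU : ∀ x y, R x y → y ∈ U) {a : α} {l : List α} (hl : (a :: l).IsChain R) :
    ∃ l', (a :: l').IsChain R ∧ l'.getLastD a = l.getLastD a ∧ l'.length ≤ U.ncard := by
  induction hn : l.length using Nat.strong_induction_on generalizing l with
  | _ n ih =>
    by_cases hnd : l.Nodup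
    · exact ⟨l, hl, rfl, hn ▸ hnd.length_le_ncard hU (hl.forall_mem_of_rel hRU)⟩
    obtain ⟨l₁, x, l₂, l₃, rfl⟩ := exists_eq_append_cons_append_cons_of_not_nodup hnd
    have hcut : (a :: (l₁ ++ x :: l₃)).IsChain R := by
      rw [isChain_cons_split] at hl ⊢
      exact ⟨hl.1, hl.2.suffix (by simp)⟩
    obtain ⟨l', hl', hlast, hlen⟩ := ih _ (by simp [← hn]) hcut rfl
    refine ⟨l', hl', ?_, hlen⟩
    rw [hlast]
    simp [getLastD_eq_getLast?, getLast?_append, getLast?_cons]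

end List

section FibreRuns

variable {Q S : Type} (𝒜 : BA Q S) (M : Matrix S S ℝ) (D : Set (Q × S))

theorem mem_fibRun_iff {f : Set (Q × S)} {w : List S} {p : Q × S} :
    p ∈ fibRun 𝒜 D f w ↔ ∃ q ∈ f, p ∈ fibRun 𝒜 D {q} w := by
  induction w generalizing f with
  | nil => simp [fibRun]
  | cons t w ih =>
    constructor
    · intro hp
      obtain ⟨r, ⟨hrD, hrt, q, hq, hδ⟩, hpr⟩ := ih.1 hp
      exact ⟨q, hq, ih.2 ⟨r, ⟨hrD, hrt, q, rfl, hδ⟩, hpr⟩⟩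
    · rintro ⟨q, hq, hp⟩
      obtain ⟨r, ⟨hrD, hrt, q', rfl, hδ⟩, hpr⟩ := ih.1 hp
      exact ih.2 ⟨r, ⟨hrD, hrt, q', hq, hδ⟩, hpr⟩

theorem mem_fibRun_singleton_cons {q p : Q × S} {t : S} {w : List S} :
    p ∈ fibRun 𝒜 D {q} (t :: w) ↔ ∃ r ∈ fibStep 𝒜 D {q} t, p ∈ fibRun 𝒜 D {r} w :=
  mem_fibRun_iff 𝒜 D (f := fibStep 𝒜 D {q} t)

/-- Two fibre runs over the same word, taken in lockstep: `x.2` is the state of the first run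
and `(x.1, x.2.2)` that of the second. -/
def SyncStep (x y : Q × (Q × S)) : Prop :=
  0 < M x.2.2 y.2.2 ∧ y.2 ∈ fibStep 𝒜 D {x.2} y.2.2 ∧
    (y.1, y.2.2) ∈ fibStep 𝒜 D {(x.1, x.2.2)} y.2.2

theorem enabled_and_mem_fibRun_iff_isChain_syncStep (w : List S) (x : Q × (Q × S))
    (p r : Q × S) :
    (Enabled M (x.2.2 :: w) ∧ p ∈ fibRun 𝒜 D {x.2} w ∧ r ∈ fibRun 𝒜 D {(x.1, x.2.2)} w) ↔
      ∃ l : List (Q × (Q × S)), (x :: l).IsChain (SyncStep 𝒜 M D) ∧ l.map (·.2.2) = w ∧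
        (l.getLastD x).2 = p ∧ ((l.getLastD x).1, (l.getLastD x).2.2) = r := by
  induction w generalizing x with
  | nil =>
    constructor
    · rintro ⟨-, rfl, rfl⟩
      exact ⟨[], .singleton _, rfl, rfl, rfl⟩
    · rintro ⟨l, -, hl, rfl, rfl⟩
      obtain rfl := List.map_eq_nil_iff.mp hl
      exact ⟨.singleton _, rfl, rfl⟩
  | cons t w ih =>
    simp only [mem_fibRun_singleton_cons]
    constructor
    · rintro ⟨hen, ⟨p₁, hp₁, hp⟩, ⟨r₁, hr₁, hr⟩⟩
      obtain ⟨hxt, hen⟩ := List.isChain_cons_cons.mp hen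
      obtain rfl : p₁.2 = t := hp₁.2.1
      have hr₁' : (r₁.1, p₁.2) = r₁ := Prod.ext rfl hr₁.2.1.symm
      obtain ⟨l, hl, hmap, hlast⟩ := (ih (r₁.1, p₁)).mp ⟨hen, hp, hr₁' ▸ hr⟩
      exact ⟨(r₁.1, p₁) :: l, List.isChain_cons_cons.mpr ⟨⟨hxt, hp₁, hr₁' ▸ hr₁⟩, hl⟩,
        by simp [hmap], by rwa [List.getLastD_cons]⟩
    · rintro ⟨_ | ⟨y, l⟩, hl, hmap, hlast⟩
      · simp at hmap
      obtain ⟨⟨hxy, hy, hy'⟩, hl⟩ := List.isChain_cons_cons.mp hl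
      rw [List.map_cons, List.cons_eq_cons] at hmap
      obtain ⟨rfl, hmap⟩ := hmap
      rw [List.getLastD_cons] at hlast
      obtain ⟨hen, hp, hr⟩ := (ih y).mpr ⟨l, hl, hmap, hlast⟩
      exact ⟨List.isChain_cons_cons.mpr ⟨hxy, hen⟩, ⟨y.2, hy, hp⟩, ⟨_, hy', hr⟩⟩

end FibreRuns

theorem stmt_5_general {Q S : Type} [Fintype Q] [Fintype S]
    (𝒜 : BA Q S) (M : Matrix S S ℝ)
    (D : Set (Q × S))
    (d : Q × S) :
    ∀ e ∈ Co 𝒜 M D d, ∃ w : List S,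
      w.length ≤ Fintype.card Q * D.ncard ∧
      Enabled M (d.2 :: w) ∧
      d ∈ fibRun 𝒜 D {d} w ∧ e ∈ fibRun 𝒜 D {d} w := by
  rintro e ⟨-, w, hw⟩
  obtain ⟨l, hl, rfl, hlast⟩ :=
    (enabled_and_mem_fibRun_iff_isChain_syncStep 𝒜 M D w (d.1, d) d e).mp hw
  obtain ⟨l', hl', hlast', hlen⟩ := hl.exists_length_le_ncard (U := Set.univ ×ˢ D)
    (Set.toFinite _) fun _ y hy => ⟨trivial, hy.2.1.1⟩
  refine ⟨l'.map (·.2.2), ?_,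
    (enabled_and_mem_fibRun_iff_isChain_syncStep 𝒜 M D _ (d.1, d) d e).mpr
      ⟨l', hl', rfl, hlast' ▸ hlast⟩⟩
  simpa [Set.ncard_prod, Nat.card_eq_fintype_card] using hlen

/-- every `e ∈ Co(d)` is witnessed by a word of length at most `|Q|·|D|`. -/
theorem stmt_5 {Q S : Type} [Fintype Q] [Fintype S]
    (𝒜 : BA Q S) (M : Matrix S S ℝ) (hM : IsMarkov M)
    (hU : 𝒜.Unambiguous) (hND : ¬ 𝒜.HasDiamond) (hAR : 𝒜.AllReachable)
    (D : Set (Q × S)) (hD : IsSCC (Bmat 𝒜 M) D) (hrec : RecurrentSCC 𝒜 M D)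
    (d : Q × S) (hd : d ∈ D) :
    ∀ e ∈ Co 𝒜 M D d, ∃ w : List S,
      w.length ≤ Fintype.card Q * D.ncard ∧
      Enabled M (d.2 :: w) ∧
      d ∈ fibRun 𝒜 D {d} w ∧ e ∈ fibRun 𝒜 D {d} w :=
  stmt_5_general 𝒜 M D d
end

section
/- Let D be a recurrent SCC of B and d ∈ D. Then there exists a word w ∈ S* of length at most |Q|²·|D| such that d⇒w is defined, d ∈ d⇒w, and d⇒w is a cut. -/
open Matrix MeasureTheory

attribute [local instance] Classical.propDecidable

/-!
Call `w` stable if `d ∈ d⇒w` and `d⇒(y w) = d⇒w` for every enabled `y` with `d ∈ d⇒y`. A stable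
word is built greedily: while some such `y` enlarges `d⇒w`, a shortest path in the graph of
synchronised pairs of runs (at most `|Q|·|D|` vertices) yields a prefix of length `≤ |Q|·|D|`
that enlarges it too. A fibre has at most `|Q|` elements, so at most `|Q|` prefixes are needed.

If `d⇒w⇒u = ∅` for some `u`, then `κ = w u` empties `d⇒(x κ)` for every `x` returning to `d`.
Reading `X₁ ⋯ Xₙ` from the chain, every return to `d` therefore costs the probability that
`d⇒X₁⋯Xₙ ≠ ∅` a fixed fraction `p > 0`. But without diamonds `(B_D^n)_{d,d}` is at most the
probability of returning to `d` at time `n`, and `ρ(B_D) = 1` together with strong connectivity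
keeps `(B_D^n)_{d,d}` bounded below for infinitely many `n`: the survival probability would
become negative.
-/

section Reachability

variable {α : Type*} (r : α → α → Prop) (a : α)

def reachWithin : ℕ → Set α
  | 0 => {a}
  | n + 1 => reachWithin n ∪ {b | ∃ c ∈ reachWithin n, r c b}

variable {r a}

lemma reachWithin_mono : Monotone (reachWithin r a) :=
  monotone_nat_of_le_succ fun _ => Set.subset_union_left

lemma reachWithin_add_eq_of_succ_eq {n : ℕ} (h : reachWithin r a (n + 1) = reachWithin r a n)
    (k : ℕ) : reachWithin r a (n + k) = reachWithin r a n := by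
  induction k with
  | zero => rfl
  | succ k ih => rw [← add_assoc, reachWithin, ih, ← reachWithin, h]

lemma exists_reachWithin_succ_eq [Finite α] :
    ∃ n ≤ Nat.card α, reachWithin r a (n + 1) = reachWithin r a n := by
  by_contra! hne
  have hgrow : ∀ n ≤ Nat.card α + 1, n + 1 ≤ (reachWithin r a n).ncard := by
    intro n hn
    induction n with
    | zero => simp [reachWithin]
    | succ n ih =>
      have hlt : reachWithin r a n ⊂ reachWithin r a (n + 1) :=
        (reachWithin_mono n.le_succ).ssubset_of_ne (hne n (by omega)).symm
      have := Set.ncard_lt_ncard hlt (Set.toFinite _)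
      have := ih (by omega)
      omega
  have := hgrow _ le_rfl
  have := Set.ncard_le_card (reachWithin r a (Nat.card α + 1))
  omega

lemma reachWithin_subset_card [Finite α] (n : ℕ) :
    reachWithin r a n ⊆ reachWithin r a (Nat.card α) := by
  obtain ⟨m, hm, hstab⟩ := exists_reachWithin_succ_eq (r := r) (a := a)
  rcases le_total n m with hnm | hmn
  · exact reachWithin_mono (hnm.trans hm)
  · obtain ⟨k, rfl⟩ := Nat.exists_eq_add_of_le hmn
    rw [reachWithin_add_eq_of_succ_eq hstab]
    exact reachWithin_mono hm

lemma Relation.ReflTransGen.mem_reachWithin_card [Finite α] {b : α}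
    (h : Relation.ReflTransGen r a b) :
    b ∈ reachWithin r a (Nat.card α) := by
  suffices ∃ n, b ∈ reachWithin r a n from
    this.elim fun n hn => reachWithin_subset_card n hn
  induction h with
  | refl => exact ⟨0, rfl⟩
  | tail _ hcb ih =>
    obtain ⟨n, hn⟩ := ih
    exact ⟨n + 1, Or.inr ⟨_, hn, hcb⟩⟩

end Reachability

namespace Matrix

variable {ι : Type*} [Fintype ι] [DecidableEq ι] {N : Matrix ι ι ℝ}

lemma pow_apply_mul_pow_apply_le (hN : ∀ i j, 0 ≤ N i j) (m n : ℕ) (i j k : ι) :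
    (N ^ m) i j * (N ^ n) j k ≤ (N ^ (m + n)) i k := by
  rw [pow_add, mul_apply]
  exact Finset.single_le_sum (fun l _ => mul_nonneg (pow_apply_nonneg hN m i l)
    (pow_apply_nonneg hN n l k)) (Finset.mem_univ j)

lemma exists_pos_frequently_le_pow_apply_self (hN : ∀ i j, 0 ≤ N i j)
    (hconn : ∀ i j, ∃ k, 0 < (N ^ k) i j) {c : ℝ} (hc : 0 < c)
    (hbig : ∀ n, ∃ i j, c ≤ (N ^ n) i j) (i₀ : ι) :
    ∃ c' > 0, ∀ n, ∃ m ≥ n, c' ≤ (N ^ m) i₀ i₀ := by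
  choose k hk using hconn
  have hne : (Finset.univ : Finset (ι × ι)).Nonempty := ⟨(i₀, i₀), Finset.mem_univ _⟩
  set κ := Finset.univ.inf' hne fun p => (N ^ k p.1 p.2) p.1 p.2
  have hκ : 0 < κ := (Finset.lt_inf'_iff _).2 fun p _ => hk p.1 p.2
  have hκle : ∀ i j, κ ≤ (N ^ k i j) i j := fun i j => Finset.inf'_le _ (Finset.mem_univ (i, j))
  refine ⟨κ * c * κ, by positivity, fun n => ?_⟩
  obtain ⟨i, j, hij⟩ := hbig n
  refine ⟨k i₀ i + n + k j i₀, by omega, ?_⟩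
  have hN' := pow_apply_nonneg hN
  calc κ * c * κ ≤ (N ^ k i₀ i) i₀ i * (N ^ n) i j * (N ^ k j i₀) j i₀ :=
        mul_le_mul (mul_le_mul (hκle _ _) hij hc.le (hN' _ _ _)) (hκle _ _) hκ.le
          (mul_nonneg (hN' _ _ _) (hN' _ _ _))
    _ ≤ (N ^ (k i₀ i + n)) i₀ j * (N ^ k j i₀) j i₀ :=
        mul_le_mul_of_nonneg_right (pow_apply_mul_pow_apply_le hN _ _ _ _ _) (hN' _ _ _)
    _ ≤ _ := pow_apply_mul_pow_apply_le hN _ _ _ _ _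

end Matrix

section SpectralRadius

attribute [local instance] Matrix.linftyOpNormedRing Matrix.linftyOpNormedAlgebra

lemma exists_inv_card_le_pow_apply_of_specRad_eq_one {ι : Type} [Fintype ι] [DecidableEq ι]
    [Nonempty ι] {N : Matrix ι ι ℝ} (hN : ∀ i j, 0 ≤ N i j) (h : specRad N = 1) (k : ℕ) :
    ∃ i j, (Fintype.card ι : ℝ)⁻¹ ≤ (N ^ k) i j := by
  obtain ⟨c, hc, hc1⟩ : ∃ c ∈ spectrum ℂ (N.map Complex.ofReal), ‖c‖ = 1 := by
    set norms := {x : ℝ | ∃ c ∈ spectrum ℂ (N.map Complex.ofReal), x = ‖c‖}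
    have hfin : norms.Finite := by
      convert (N.map Complex.ofReal).finite_spectrum.image (‖·‖) using 1
      ext x; simp [norms, eq_comm]
    have hne : norms.Nonempty := by
      by_contra he
      rw [Set.not_nonempty_iff_eq_empty] at he
      simp [specRad, norms, he] at h
    obtain ⟨c, hc, hx⟩ := hne.csSup_mem hfin
    exact ⟨c, hc, hx ▸ h⟩
  have hck : c ^ k ∈ spectrum ℂ ((N ^ k).map Complex.ofReal) := by
    rw [show (N ^ k).map Complex.ofReal = N.map Complex.ofReal ^ k from
      N.map_pow Complex.ofRealHom k]
    exact spectrum.pow_image_subset _ k ⟨c, hc, rfl⟩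
  have hle := spectrum.norm_le_norm_of_mem hck
  rw [norm_pow, hc1, one_pow, Matrix.linfty_opNorm_def] at hle
  obtain ⟨i, -, hi⟩ := Finset.exists_mem_eq_sup Finset.univ Finset.univ_nonempty
    fun i => ∑ j, ‖((N ^ k).map Complex.ofReal) i j‖₊
  rw [hi] at hle
  push_cast at hle
  have hsum : ∑ _j : ι, (Fintype.card ι : ℝ)⁻¹ = 1 := by
    rw [Finset.sum_const, Finset.card_univ, nsmul_eq_mul, mul_inv_cancel₀ (by positivity)]
  obtain ⟨j, -, hj⟩ := Finset.exists_le_of_sum_le Finset.univ_nonempty (hsum.le.trans (by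
    simpa [Complex.norm_real, abs_of_nonneg (Matrix.pow_apply_nonneg hN k _ _)] using hle))
  exact ⟨i, j, hj⟩

end SpectralRadius

lemma IsSCC.exists_pow_subMat_pos {V : Type} {N : Matrix V V ℝ} (hN : ∀ i j, 0 ≤ N i j)
    {D : Set V} [Fintype D] [DecidableEq D] (hD : IsSCC N D) (a b : D) :
    ∃ k, 0 < (subMat N D ^ k) a b := by
  have hsub : ∀ i j, 0 ≤ subMat N D i j := fun i j => hN _ _
  obtain ⟨v, rfl⟩ := hD
  suffices key : ∀ c (hac : Relation.ReflTransGen (fun x y => 0 < N x y) a c)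
      (hc : Relation.ReflTransGen (fun x y => 0 < N x y) c v),
        ∃ k, 0 < (subMat N _ ^ k) a ⟨c, a.2.1.trans hac, hc⟩ from
    key b (a.2.2.trans b.2.1) b.2.2
  intro c hac
  induction hac with
  | refl => exact fun _ => ⟨0, by simp⟩
  | tail hac' hstep ih =>
    intro hc
    obtain ⟨k, hk⟩ := ih (.head hstep hc)
    refine ⟨k + 1, lt_of_lt_of_le (mul_pos hk ?_)
      (Matrix.pow_apply_mul_pow_apply_le hsub k 1 _ _ _)⟩
    rwa [pow_one]

section ChainExpect

variable {S : Type} [Fintype S]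

/-- `chainExpect M n t g` is the expectation of `g (X₁ ⋯ Xₙ)` for the Markov chain `M`
started in `X₀ = t`. -/
noncomputable def chainExpect (M : Matrix S S ℝ) : ℕ → S → (List S → ℝ) →ₗ[ℝ] ℝ
  | 0, _ => LinearMap.proj []
  | n + 1, t => ∑ t', M t t' • (chainExpect M n t').comp (LinearMap.funLeft ℝ ℝ (List.cons t'))

variable {M : Matrix S S ℝ}

@[simp] lemma chainExpect_zero (t : S) (g : List S → ℝ) : chainExpect M 0 t g = g [] := rfl

@[simp] lemma chainExpect_fun_zero (n : ℕ) (t : S) : chainExpect M n t (fun _ => 0) = 0 :=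
  map_zero _

lemma chainExpect_succ (n : ℕ) (t : S) (g : List S → ℝ) :
    chainExpect M (n + 1) t g = ∑ t', M t t' * chainExpect M n t' fun x => g (t' :: x) := by
  simp [chainExpect, LinearMap.funLeft, Function.comp_def]

lemma chainExpect_nonneg (hM : IsMarkov M) {n : ℕ} {t : S} {g : List S → ℝ}
    (hg : ∀ x, Enabled M (t :: x) → 0 ≤ g x) : 0 ≤ chainExpect M n t g := by
  induction n generalizing t g with
  | zero => exact hg [] (List.isChain_singleton t)
  | succ n ih =>
    rw [chainExpect_succ]
    refine Finset.sum_nonneg fun t' _ => ?_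
    rcases (hM.1 t t').eq_or_lt with h | h
    · rw [← h, zero_mul]
    · exact mul_nonneg h.le (ih fun x hx => hg _ (List.isChain_cons_cons.2 ⟨h, hx⟩))

lemma chainExpect_mono (hM : IsMarkov M) {n : ℕ} {t : S} {g h : List S → ℝ}
    (hgh : ∀ x, Enabled M (t :: x) → g x ≤ h x) : chainExpect M n t g ≤ chainExpect M n t h := by
  have := chainExpect_nonneg hM (n := n) (g := h - g) fun x hx => sub_nonneg.2 (hgh x hx)
  rwa [map_sub, sub_nonneg] at this

lemma chainExpect_const (hM : IsMarkov M) (n : ℕ) (t : S) (c : ℝ) :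
    chainExpect M n t (fun _ => c) = c := by
  induction n generalizing t with
  | zero => rfl
  | succ n ih => simp [chainExpect_succ, ih, ← Finset.sum_mul, hM.2 t]

lemma chainExpect_add (n m : ℕ) (t : S) (g : List S → ℝ) :
    chainExpect M (n + m) t g =
      chainExpect M n t fun x => chainExpect M m (x.getLastD t) fun y => g (x ++ y) := by
  induction n generalizing t g with
  | zero => simp
  | succ n ih =>
    simp only [Nat.succ_add, chainExpect_succ, ih, List.getLastD_cons, List.cons_append]

lemma chainExpect_ite_eq_pos (hM : IsMarkov M) {t : S} {κ : List S} (hκ : Enabled M (t :: κ)) :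
    0 < chainExpect M κ.length t fun y => if y = κ then 1 else 0 := by
  induction κ generalizing t with
  | nil => simp
  | cons t' κ ih =>
    obtain ⟨ht, hκ⟩ := List.isChain_cons_cons.1 hκ
    rw [List.length_cons, chainExpect_succ]
    refine lt_of_lt_of_le ?_ (Finset.single_le_sum (f := fun t'' => M t t'' * _)
      (fun t'' _ => mul_nonneg (hM.1 t t'') (chainExpect_nonneg hM fun _ _ => ?_))
      (Finset.mem_univ t'))
    · simpa using mul_pos ht (ih hκ)
    · split_ifs <;> norm_num

end ChainExpect

lemma Finset.sum_boole_le_of_unique {ι : Type*} (s : Finset ι) {P : ι → Prop} [DecidablePred P]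
    {R : Prop} [Decidable R]
    (huniq : ∀ i ∈ s, ∀ j ∈ s, P i → P j → i = j) (hR : ∀ i ∈ s, P i → R) :
    ∑ i ∈ s, (if P i then (1 : ℝ) else 0) ≤ if R then 1 else 0 := by
  rw [Finset.sum_boole]
  split_ifs with h
  · exact_mod_cast Finset.card_le_one.2 fun i hi j hj =>
      huniq i (Finset.mem_filter.1 hi).1 j (Finset.mem_filter.1 hj).1
        (Finset.mem_filter.1 hi).2 (Finset.mem_filter.1 hj).2
  · simpa [Finset.filter_eq_empty_iff] using fun i hi hPi => h (hR i hi hPi)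

lemma enabled_append {S : Type} {M : Matrix S S ℝ} {t : S} {x y : List S}
    (hx : Enabled M (t :: x)) (hy : Enabled M (x.getLastD t :: y)) :
    Enabled M (t :: (x ++ y)) := by
  induction x generalizing t with
  | nil => simpa using hy
  | cons t' x ih =>
    obtain ⟨htt', hx⟩ := List.isChain_cons_cons.1 hx
    exact List.isChain_cons_cons.2 ⟨htt', ih hx (by rwa [List.getLastD_cons] at hy)⟩

section Fibres

variable {Q S : Type} {𝒜 : BA Q S} {D : Set (Q × S)}

@[simp] lemma fibRun_nil (f : Set (Q × S)) : fibRun 𝒜 D f [] = f := rfl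

lemma fibRun_append (f : Set (Q × S)) (x y : List S) :
    fibRun 𝒜 D f (x ++ y) = fibRun 𝒜 D (fibRun 𝒜 D f x) y := by
  induction x generalizing f with
  | nil => rfl
  | cons t x ih => exact ih _

lemma fibRun_mono {f g : Set (Q × S)} (h : f ⊆ g) (x : List S) :
    fibRun 𝒜 D f x ⊆ fibRun 𝒜 D g x := by
  induction x generalizing f g with
  | nil => exact h
  | cons t x ih => exact ih fun p ⟨hpD, hpt, e, he, hδ⟩ => ⟨hpD, hpt, e, h he, hδ⟩

lemma fibRun_empty (x : List S) : fibRun 𝒜 D ∅ x = ∅ := by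
  induction x with
  | nil => rfl
  | cons t x ih => simpa [fibRun, fibStep] using ih

lemma fibRun_subset {f : Set (Q × S)} (hf : f ⊆ D) (x : List S) : fibRun 𝒜 D f x ⊆ D := by
  induction x generalizing f with
  | nil => exact hf
  | cons t x ih => exact ih fun _ hp => hp.1

lemma mem_fibRun_source {f : Set (Q × S)} {x : List S} {e : Q × S}
    (he : e ∈ fibRun 𝒜 D f x) : ∃ e₀ ∈ f, e ∈ fibRun 𝒜 D {e₀} x := by
  induction x generalizing f with
  | nil => exact ⟨e, he, rfl⟩
  | cons t x ih =>
    obtain ⟨e₁, ⟨he₁D, he₁t, e₀, he₀, hδ⟩, he₁⟩ := ih he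
    have : e₁ ∈ fibStep 𝒜 D {e₀} t := ⟨he₁D, he₁t, e₀, rfl, hδ⟩
    exact ⟨e₀, he₀, fibRun_mono (Set.singleton_subset_iff.2 this) x he₁⟩

lemma snd_eq_getLastD_of_mem_fibRun {f : Set (Q × S)} {t : S} (hf : ∀ e ∈ f, e.2 = t)
    {x : List S} {e : Q × S} (he : e ∈ fibRun 𝒜 D f x) : e.2 = x.getLastD t := by
  induction x generalizing f t with
  | nil => exact hf e he
  | cons t' x ih =>
    rw [List.getLastD_cons]
    exact ih (fun _ hp => hp.2.1) he

lemma snd_eq_getLastD_of_mem_fibRun_singleton {d e : Q × S} {x : List S}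
    (he : e ∈ fibRun 𝒜 D {d} x) : e.2 = x.getLastD d.2 :=
  snd_eq_getLastD_of_mem_fibRun (fun _ h => by rw [h]) he

lemma ncard_fibRun_singleton_le [Finite Q] (d : Q × S) (x : List S) :
    (fibRun 𝒜 D {d} x).ncard ≤ Nat.card Q := by
  have hinj : Set.InjOn Prod.fst (fibRun 𝒜 D {d} x) := fun e he e' he' h =>
    Prod.ext h (by rw [snd_eq_getLastD_of_mem_fibRun_singleton he,
      snd_eq_getLastD_of_mem_fibRun_singleton he'])
  calc (fibRun 𝒜 D {d} x).ncard ≤ (Set.univ : Set Q).ncard :=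
        Set.ncard_le_ncard_of_injOn _ (fun _ _ => Set.mem_univ _) hinj
    _ = Nat.card Q := Set.ncard_univ Q

lemma BA.isRun_of_mem_fibRun {e e' : Q × S} {x : List S} (h : e' ∈ fibRun 𝒜 D {e} x) :
    ∃ ρ, 𝒜.IsRun e.1 (e.2 :: x).dropLast (e.1 :: ρ) e'.1 := by
  induction x generalizing e with
  | nil => exact ⟨[], by rw [show e' = e from h], rfl⟩
  | cons t x ih =>
    obtain ⟨z, ⟨-, hzt, _, rfl, hδ⟩, hz⟩ := mem_fibRun_source (f := fibStep 𝒜 D {e} t) (x := x) h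
    obtain ⟨ρ, hρ⟩ := ih hz
    refine ⟨z.1 :: ρ, ?_⟩
    rw [List.dropLast_cons_cons]
    exact ⟨z.1, z.1 :: ρ, rfl, hδ, by rwa [hzt] at hρ⟩

/-- Otherwise the runs `p → z₁ ⇒ e` and `p → z₂ ⇒ e` along the same word form a diamond. -/
lemma eq_of_mem_fibStep_of_mem_fibRun (hND : ¬ 𝒜.HasDiamond) {p z₁ z₂ e : Q × S} {t : S}
    {x : List S} (h₁ : z₁ ∈ fibStep 𝒜 D {p} t) (h₂ : z₂ ∈ fibStep 𝒜 D {p} t)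
    (he₁ : e ∈ fibRun 𝒜 D {z₁} x) (he₂ : e ∈ fibRun 𝒜 D {z₂} x) : z₁ = z₂ := by
  obtain ⟨-, h₁t, _, hp₁ : _ = p, hδ₁⟩ := h₁
  obtain ⟨-, h₂t, _, hp₂ : _ = p, hδ₂⟩ := h₂
  rw [hp₁] at hδ₁
  rw [hp₂] at hδ₂
  obtain ⟨ρ₁, hρ₁⟩ := BA.isRun_of_mem_fibRun he₁
  obtain ⟨ρ₂, hρ₂⟩ := BA.isRun_of_mem_fibRun he₂
  rw [h₁t] at hρ₁
  rw [h₂t] at hρ₂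
  refine Prod.ext (Classical.byContradiction fun hne => hND ?_) (h₁t.trans h₂t.symm)
  exact ⟨p.1, e.1, p.2 :: (t :: x).dropLast, p.1 :: z₁.1 :: ρ₁, p.1 :: z₂.1 :: ρ₂,
    by simp [hne], ⟨_, _, rfl, hδ₁, hρ₁⟩, ⟨_, _, rfl, hδ₂, hρ₂⟩⟩

end Fibres

section FibreProbabilities

variable {Q S : Type} [Fintype S] {𝒜 : BA Q S} {M : Matrix S S ℝ} {D : Set (Q × S)}

lemma Bmat_nonneg (hM : IsMarkov M) (p p' : Q × S) : 0 ≤ Bmat 𝒜 M p p' := by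
  simp only [Bmat, Matrix.of_apply]
  split_ifs
  exacts [hM.1 _ _, le_rfl]

lemma subMat_Bmat_mul_chainExpect (n : ℕ) (p z : D) (g : List S → ℝ) :
    subMat (Bmat 𝒜 M) D p z * chainExpect M n z.1.2 g =
      ∑ t, M p.1.2 t * chainExpect M n t fun x =>
        if z.1 ∈ fibStep 𝒜 D {p.1} t then g x else 0 := by
  rw [Finset.sum_eq_single z.1.2]
  · by_cases hδ : z.1.1 ∈ 𝒜.delta p.1.1 p.1.2 <;> simp [subMat, Bmat, fibStep, hδ, z.2]
  · intro t _ ht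
    simp [fibStep, Ne.symm ht]
  · simp

variable (𝒜 M D) (d : Q × S)

noncomputable def survivalProb (n : ℕ) : ℝ :=
  chainExpect M n d.2 fun x => if (fibRun 𝒜 D {d} x).Nonempty then 1 else 0

noncomputable def returnProb (n : ℕ) : ℝ :=
  chainExpect M n d.2 fun x => if d ∈ fibRun 𝒜 D {d} x then 1 else 0

variable {𝒜 M D d}

lemma chainExpect_nonempty_fibRun_append_le (hM : IsMarkov M) (f : Set (Q × S)) (x : List S)
    (m : ℕ) (t : S) :
    (chainExpect M m t fun y => if (fibRun 𝒜 D f (x ++ y)).Nonempty then 1 else 0) ≤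
      if (fibRun 𝒜 D f x).Nonempty then 1 else 0 := by
  split_ifs with h
  · calc _ ≤ chainExpect M m t (fun _ => 1) :=
          chainExpect_mono hM fun y _ => by split_ifs <;> norm_num
      _ = 1 := chainExpect_const hM _ _ _
  · rw [Set.not_nonempty_iff_eq_empty] at h
    simp [fibRun_append, h, fibRun_empty]

lemma survivalProb_nonneg (hM : IsMarkov M) (n : ℕ) : 0 ≤ survivalProb 𝒜 M D d n :=
  chainExpect_nonneg hM fun _ _ => by split_ifs <;> norm_num

lemma survivalProb_antitone (hM : IsMarkov M) : Antitone (survivalProb 𝒜 M D d) :=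
  antitone_nat_of_succ_le fun n => by
    rw [survivalProb, survivalProb, chainExpect_add n 1]
    exact chainExpect_mono hM fun x _ => chainExpect_nonempty_fibRun_append_le hM _ x 1 _

lemma survivalProb_add_length_le (hM : IsMarkov M) {κ : List S}
    (hkill : ∀ x, Enabled M (d.2 :: x) → d ∈ fibRun 𝒜 D {d} x → fibRun 𝒜 D {d} (x ++ κ) = ∅)
    (n : ℕ) :
    survivalProb 𝒜 M D d (n + κ.length) ≤ survivalProb 𝒜 M D d n -
      (chainExpect M κ.length d.2 fun y => if y = κ then 1 else 0) * returnProb 𝒜 M D d n := by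
  set p := chainExpect M κ.length d.2 fun y => if y = κ then 1 else 0
  set s : List S → ℝ := fun x => if (fibRun 𝒜 D {d} x).Nonempty then 1 else 0
  set r : List S → ℝ := fun x => if d ∈ fibRun 𝒜 D {d} x then 1 else 0
  have hpointwise : ∀ x, Enabled M (d.2 :: x) →
      (chainExpect M κ.length (x.getLastD d.2) fun y => s (x ++ y)) ≤ (s - p • r) x := by
    intro x hx
    by_cases hdx : d ∈ fibRun 𝒜 D {d} x
    · rw [← snd_eq_getLastD_of_mem_fibRun_singleton hdx]
      calc _ ≤ chainExpect M κ.length d.2 ((fun _ => 1) - fun y => if y = κ then 1 else 0) := by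
            refine chainExpect_mono hM fun y _ => ?_
            by_cases hy : y = κ
            · simp [s, hy, hkill x hx hdx]
            · simp only [s, Pi.sub_apply, hy, if_false, sub_zero]
              split_ifs <;> norm_num
        _ = (s - p • r) x := by
            simp [map_sub, chainExpect_const hM, s, r, p, hdx, Set.nonempty_of_mem hdx]
    · simpa [r, hdx] using chainExpect_nonempty_fibRun_append_le hM {d} x κ.length _
  calc survivalProb 𝒜 M D d (n + κ.length)
      = chainExpect M n d.2 fun x => chainExpect M κ.length (x.getLastD d.2) fun y => s (x ++ y) :=
        chainExpect_add _ _ _ _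
    _ ≤ chainExpect M n d.2 (s - p • r) := chainExpect_mono hM hpointwise
    _ = _ := by rw [map_sub, map_smul, smul_eq_mul]; rfl

end FibreProbabilities

section Transience

variable {Q S : Type} [Fintype Q] [Fintype S] {𝒜 : BA Q S} {M : Matrix S S ℝ}
  {D : Set (Q × S)}

/-- Expanding `B^n` over words, no word carries two runs from `p` to `p'`, as there are no
diamonds. -/
lemma pow_subMat_Bmat_apply_le (hM : IsMarkov M) (hND : ¬ 𝒜.HasDiamond) (n : ℕ) (p p' : D) :
    (subMat (Bmat 𝒜 M) D ^ n) p p' ≤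
      chainExpect M n p.1.2 fun x => if p'.1 ∈ fibRun 𝒜 D {p.1} x then 1 else 0 := by
  induction n generalizing p with
  | zero =>
    by_cases h : p = p'
    · simp [h]
    · rw [pow_zero, Matrix.one_apply_ne h]
      exact chainExpect_nonneg hM fun _ _ => by split_ifs <;> norm_num
  | succ n ih =>
    calc (subMat (Bmat 𝒜 M) D ^ (n + 1)) p p'
        = ∑ z, subMat (Bmat 𝒜 M) D p z * (subMat (Bmat 𝒜 M) D ^ n) z p' := by
          rw [pow_succ', Matrix.mul_apply]
      _ ≤ ∑ z, subMat (Bmat 𝒜 M) D p z *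
            chainExpect M n z.1.2 (fun x => if p'.1 ∈ fibRun 𝒜 D {z.1} x then 1 else 0) :=
          Finset.sum_le_sum fun z _ => mul_le_mul_of_nonneg_left (ih z) (Bmat_nonneg hM _ _)
      _ = ∑ t, M p.1.2 t * chainExpect M n t fun x => ∑ z : D,
            if z.1 ∈ fibStep 𝒜 D {p.1} t ∧ p'.1 ∈ fibRun 𝒜 D {z.1} x then 1 else 0 := by
          simp_rw [subMat_Bmat_mul_chainExpect, ite_and]
          rw [Finset.sum_comm]
          refine Finset.sum_congr rfl fun t _ => ?_
          rw [← Finset.mul_sum, ← map_sum]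
          congr 2
          ext x
          simp
      _ ≤ ∑ t, M p.1.2 t * chainExpect M n t fun x =>
            if p'.1 ∈ fibRun 𝒜 D (fibStep 𝒜 D {p.1} t) x then 1 else 0 := by
          refine Finset.sum_le_sum fun t _ => mul_le_mul_of_nonneg_left
            (chainExpect_mono hM fun x _ => Finset.sum_boole_le_of_unique _ ?_ ?_) (hM.1 _ _)
          · exact fun z _ z' _ hz hz' =>
              Subtype.ext (eq_of_mem_fibStep_of_mem_fibRun hND hz.1 hz'.1 hz.2 hz'.2)
          · exact fun z _ hz => fibRun_mono (Set.singleton_subset_iff.2 hz.1) x hz.2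
      _ = _ := by rw [chainExpect_succ]; rfl

theorem not_recurrentSCC_of_killing_word (hM : IsMarkov M) (hND : ¬ 𝒜.HasDiamond)
    (hD : IsSCC (Bmat 𝒜 M) D) {d : Q × S} (hd : d ∈ D) {κ : List S} (hκ : Enabled M (d.2 :: κ))
    (hkill : ∀ x, Enabled M (d.2 :: x) → d ∈ fibRun 𝒜 D {d} x → fibRun 𝒜 D {d} (x ++ κ) = ∅) :
    ¬ RecurrentSCC 𝒜 M D := by
  intro hrec
  have hB : ∀ p p' : D, 0 ≤ subMat (Bmat 𝒜 M) D p p' := fun _ _ => Bmat_nonneg hM _ _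
  have : Nonempty D := ⟨⟨d, hd⟩⟩
  obtain ⟨c, hc, hfreq⟩ := Matrix.exists_pos_frequently_le_pow_apply_self hB
    (hD.exists_pow_subMat_pos (Bmat_nonneg hM)) (by positivity)
    (exists_inv_card_le_pow_apply_of_specRad_eq_one hB hrec) ⟨d, hd⟩
  set p := chainExpect M κ.length d.2 fun y => if y = κ then 1 else 0
  have hp : 0 < p := chainExpect_ite_eq_pos hM hκ
  -- a bounded-below sequence cannot drop by `p * c` from arbitrarily late indices
  have hbdd : BddBelow (Set.range (survivalProb 𝒜 M D d)) :=
    ⟨0, by rintro _ ⟨n, rfl⟩; exact survivalProb_nonneg hM n⟩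
  obtain ⟨N, hN⟩ := exists_lt_of_ciInf_lt
    (lt_add_of_pos_right (⨅ n, survivalProb 𝒜 M D d n) (mul_pos hp hc))
  obtain ⟨m, hm, hcm⟩ := hfreq N
  have hret : c ≤ returnProb 𝒜 M D d m :=
    hcm.trans (pow_subMat_Bmat_apply_le hM hND m ⟨d, hd⟩ ⟨d, hd⟩)
  nlinarith [survivalProb_add_length_le hM hkill m,
    survivalProb_antitone (𝒜 := 𝒜) (D := D) (d := d) hM hm,
    ciInf_le hbdd (m + κ.length), mul_le_mul_of_nonneg_left hret hp.le]

end Transience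

section PairGraph

variable {Q S : Type} (𝒜 : BA Q S) (M : Matrix S S ℝ) (D : Set (Q × S))

/-- Synchronised steps of two runs inside `D` that read the same letters: the vertex `(q, e)`
stands for the pair of positions `(q, e.2)` and `e`. -/
def pairStep (a b : Q × D) : Prop :=
  0 < M a.2.1.2 b.2.1.2 ∧ (b.1, b.2.1.2) ∈ D ∧ b.1 ∈ 𝒜.delta a.1 a.2.1.2 ∧
    b.2.1.1 ∈ 𝒜.delta a.2.1.1 a.2.1.2

variable {𝒜 M D}

lemma reflTransGen_pairStep {q : Q} {e : D} {y : List S} (hy : Enabled M (e.1.2 :: y))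
    {b : Q × D} (h₁ : (b.1, b.2.1.2) ∈ fibRun 𝒜 D {(q, e.1.2)} y)
    (h₂ : b.2.1 ∈ fibRun 𝒜 D {e.1} y) :
    Relation.ReflTransGen (pairStep 𝒜 M D) (q, e) b := by
  induction y generalizing q e with
  | nil =>
    have hq : b.1 = q := (Prod.ext_iff.1 (h₁ : _ = _)).1
    have he : b.2 = e := Subtype.ext h₂
    rw [show b = (q, e) from Prod.ext hq he]
  | cons t y ih =>
    obtain ⟨a₁, ⟨ha₁D, ha₁t, _, rfl, hδa⟩, ha₁⟩ :=
      mem_fibRun_source (f := fibStep 𝒜 D {(q, e.1.2)} t) (x := y) h₁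
    obtain ⟨b₁, ⟨hb₁D, hb₁t, _, rfl, hδb⟩, hb₁⟩ :=
      mem_fibRun_source (f := fibStep 𝒜 D {e.1} t) (x := y) h₂
    obtain ⟨het, hy⟩ := List.isChain_cons_cons.1 hy
    have ha₁ : a₁ = (a₁.1, b₁.2) := Prod.ext rfl (ha₁t.trans hb₁t.symm)
    have hstep : pairStep 𝒜 M D (q, e) (a₁.1, ⟨b₁, hb₁D⟩) :=
      ⟨by rwa [hb₁t], by rwa [← ha₁], hδa, hδb⟩
    exact .head hstep (ih (by rwa [hb₁t]) (by rwa [← ha₁]) hb₁)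

lemma exists_word_of_mem_reachWithin {q : Q} {e : D} {n : ℕ} {b : Q × D}
    (hb : b ∈ reachWithin (pairStep 𝒜 M D) (q, e) n) :
    ∃ y : List S, y.length ≤ n ∧ Enabled M (e.1.2 :: y) ∧
      (b.1, b.2.1.2) ∈ fibRun 𝒜 D {(q, e.1.2)} y ∧ b.2.1 ∈ fibRun 𝒜 D {e.1} y := by
  induction n generalizing b with
  | zero =>
    rw [show b = (q, e) from hb]
    exact ⟨[], le_rfl, List.isChain_singleton _, rfl, rfl⟩
  | succ n ih =>
    rcases hb with hb | ⟨c, hc, hpos, hbD, hδ₁, hδ₂⟩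
    · obtain ⟨y, hy, h⟩ := ih hb
      exact ⟨y, by omega, h⟩
    · obtain ⟨y, hy, hen, h₁, h₂⟩ := ih hc
      refine ⟨y ++ [b.2.1.2], by simp [hy], enabled_append hen ?_, ?_, ?_⟩
      · rw [← snd_eq_getLastD_of_mem_fibRun_singleton h₂]
        exact List.isChain_pair.2 hpos
      · rw [fibRun_append]
        exact (⟨hbD, rfl, _, h₁, hδ₁⟩ : _ ∈ fibStep 𝒜 D _ _)
      · rw [fibRun_append]
        exact (⟨b.2.2, rfl, _, h₂, hδ₂⟩ : _ ∈ fibStep 𝒜 D _ _)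

/-- `|Q| · |D|` is the number of vertices of the graph `pairStep`. -/
lemma exists_short_common_word [Finite Q] [Finite S] {e₁ e₂ : Q × S} (he₂ : e₂ ∈ D)
    (h₁₂ : e₁.2 = e₂.2) {y : List S} (hy : Enabled M (e₂.2 :: y)) {a b : Q × S}
    (ha : a ∈ fibRun 𝒜 D {e₁} y) (hb : b ∈ fibRun 𝒜 D {e₂} y) :
    ∃ y' : List S, y'.length ≤ Nat.card Q * D.ncard ∧ Enabled M (e₂.2 :: y') ∧
      a ∈ fibRun 𝒜 D {e₁} y' ∧ b ∈ fibRun 𝒜 D {e₂} y' := by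
  have hbD : b ∈ D := fibRun_subset (Set.singleton_subset_iff.2 he₂) y hb
  have he₁ : e₁ = (e₁.1, e₂.2) := Prod.ext rfl h₁₂
  have ha' : a = (a.1, b.2) := Prod.ext rfl (by
    rw [snd_eq_getLastD_of_mem_fibRun_singleton ha, snd_eq_getLastD_of_mem_fibRun_singleton hb,
      h₁₂])
  have hreach := (reflTransGen_pairStep (q := e₁.1) (e := ⟨e₂, he₂⟩) (b := (a.1, ⟨b, hbD⟩)) hy
    (by rwa [← ha', ← he₁]) hb).mem_reachWithin_card
  rw [Nat.card_prod, Nat.card_coe_set_eq] at hreach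
  obtain ⟨y', hlen, hen, h₁, h₂⟩ := exists_word_of_mem_reachWithin hreach
  exact ⟨y', hlen, hen, by rwa [ha', he₁], h₂⟩

end PairGraph

section StableWord

variable {Q S : Type} [Finite Q] [Finite S] {𝒜 : BA Q S} {M : Matrix S S ℝ} {D : Set (Q × S)}
  {d : Q × S}

lemma exists_short_enlarging_prefix (hd : d ∈ D) {w y : List S} (hy : Enabled M (d.2 :: y))
    (hdy : d ∈ fibRun 𝒜 D {d} y) (hne : fibRun 𝒜 D {d} (y ++ w) ≠ fibRun 𝒜 D {d} w) :
    ∃ y' : List S, y'.length ≤ Nat.card Q * D.ncard ∧ Enabled M (d.2 :: y') ∧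
      d ∈ fibRun 𝒜 D {d} y' ∧ fibRun 𝒜 D {d} w ⊂ fibRun 𝒜 D {d} (y' ++ w) := by
  have hsub : ∀ {y}, d ∈ fibRun 𝒜 D {d} y → fibRun 𝒜 D {d} w ⊆ fibRun 𝒜 D {d} (y ++ w) :=
    fun h => by
      rw [fibRun_append]
      exact fibRun_mono (Set.singleton_subset_iff.2 h) w
  obtain ⟨e, he, hew⟩ := Set.exists_of_ssubset ((hsub hdy).ssubset_of_ne hne.symm)
  rw [fibRun_append] at he
  obtain ⟨e', he', hee'⟩ := mem_fibRun_source he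
  obtain ⟨y', hlen, hen, hdy', he'y'⟩ := exists_short_common_word hd rfl hy hdy he'
  refine ⟨y', hlen, hen, hdy', (hsub hdy').ssubset_of_ne fun h => hew ?_⟩
  rw [h, fibRun_append]
  exact fibRun_mono (Set.singleton_subset_iff.2 he'y') w hee'

lemma exists_stable_extension (hd : d ∈ D) (w : List S) (hw : Enabled M (d.2 :: w))
    (hdw : d ∈ fibRun 𝒜 D {d} w)
    (hlen : w.length ≤ Nat.card Q * D.ncard * (fibRun 𝒜 D {d} w).ncard) :
    ∃ w' : List S, w'.length ≤ Nat.card Q * D.ncard * (fibRun 𝒜 D {d} w').ncard ∧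
      Enabled M (d.2 :: w') ∧ d ∈ fibRun 𝒜 D {d} w' ∧
      ∀ y, Enabled M (d.2 :: y) → d ∈ fibRun 𝒜 D {d} y →
        fibRun 𝒜 D {d} (y ++ w') = fibRun 𝒜 D {d} w' := by
  by_cases hstable : ∀ y, Enabled M (d.2 :: y) → d ∈ fibRun 𝒜 D {d} y →
      fibRun 𝒜 D {d} (y ++ w) = fibRun 𝒜 D {d} w
  · exact ⟨w, hlen, hw, hdw, hstable⟩
  push Not at hstable
  obtain ⟨y, hy, hdy, hne⟩ := hstable
  obtain ⟨y', hy'len, hy', hdy', hgrow⟩ := exists_short_enlarging_prefix hd hy hdy hne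
  have hcard := Set.ncard_lt_ncard hgrow (Set.toFinite _)
  have hbound := ncard_fibRun_singleton_le (𝒜 := 𝒜) (D := D) d (y' ++ w)
  refine exists_stable_extension hd (y' ++ w) ?_ (hgrow.subset hdw) ?_
  · exact enabled_append hy' (by rwa [← snd_eq_getLastD_of_mem_fibRun_singleton hdy'])
  · calc (y' ++ w).length ≤ Nat.card Q * D.ncard * ((fibRun 𝒜 D {d} w).ncard + 1) := by
          rw [List.length_append, mul_add, mul_one]
          omega
      _ ≤ _ := Nat.mul_le_mul_left _ hcard
termination_by Nat.card Q - (fibRun 𝒜 D {d} w).ncard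

lemma exists_stable_word (hd : d ∈ D) :
    ∃ w : List S, w.length ≤ Nat.card Q * D.ncard * Nat.card Q ∧
      Enabled M (d.2 :: w) ∧ d ∈ fibRun 𝒜 D {d} w ∧
      ∀ y, Enabled M (d.2 :: y) → d ∈ fibRun 𝒜 D {d} y →
        fibRun 𝒜 D {d} (y ++ w) = fibRun 𝒜 D {d} w := by
  obtain ⟨w, hlen, hw⟩ :=
    exists_stable_extension (𝒜 := 𝒜) (M := M) hd [] (List.isChain_singleton _) rfl (by simp)
  exact ⟨w, hlen.trans (Nat.mul_le_mul_left _ (ncard_fibRun_singleton_le d w)), hw⟩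

end StableWord

theorem stmt_6_general {Q S : Type} [Fintype Q] [Fintype S]
    (𝒜 : BA Q S) (M : Matrix S S ℝ) (hM : IsMarkov M)
    (hND : ¬ 𝒜.HasDiamond)
    (D : Set (Q × S)) (hD : IsSCC (Bmat 𝒜 M) D) (hrec : RecurrentSCC 𝒜 M D)
    (d : Q × S) (hd : d ∈ D) :
    ∃ w : List S,
      w.length ≤ Fintype.card Q ^ 2 * D.ncard ∧
      Enabled M (d.2 :: w) ∧
      d ∈ fibRun 𝒜 D {d} w ∧
      IsCut 𝒜 M D (fibRun 𝒜 D {d} w) := by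
  obtain ⟨w, hlen, hw, hdw, hstable⟩ := exists_stable_word (𝒜 := 𝒜) (M := M) hd
  refine ⟨w, ?_, hw, hdw, d, hd, w, hw, rfl, fun u hu hempty => ?_⟩
  · rw [← Nat.card_eq_fintype_card]
    linarith
  · -- otherwise `w u` would empty every fibre that returned to `d`, making `D` transient
    refine not_recurrentSCC_of_killing_word hM hND hD hd (enabled_append hw hu)
      (fun x hx hdx => ?_) hrec
    rw [← List.append_assoc, fibRun_append, hstable x hx hdx, hempty]

/-- there is a word of length at most `|Q|²·|D|` such that
`d ∈ d⇒w` is a cut. -/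
theorem stmt_6 {Q S : Type} [Fintype Q] [Fintype S]
    (𝒜 : BA Q S) (M : Matrix S S ℝ) (hM : IsMarkov M)
    (hU : 𝒜.Unambiguous) (hND : ¬ 𝒜.HasDiamond) (hAR : 𝒜.AllReachable)
    (D : Set (Q × S)) (hD : IsSCC (Bmat 𝒜 M) D) (hrec : RecurrentSCC 𝒜 M D)
    (d : Q × S) (hd : d ∈ D) :
    ∃ w : List S,
      w.length ≤ Fintype.card Q ^ 2 * D.ncard ∧
      Enabled M (d.2 :: w) ∧
      d ∈ fibRun 𝒜 D {d} w ∧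
      IsCut 𝒜 M D (fibRun 𝒜 D {d} w) :=
  stmt_6_general 𝒜 M hM hND D hD hrec d hd
end
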